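/- Let R be a commutative ring, S a multiplicatively closed subset, M an R-module, and N a submodule with Ann_R(N) ∩ S = ∅. Then N is an S-2-absorbing second submodule of M if and only if s³N is a strongly 2-absorbing second submodule of M for some s ∈ S. -/
import Mathlib


open Pointwise

/-- `S` is a multiplicatively closed subset of `R`: `0 ∉ S`, `1 ∈ S`, closed under products. -/
def IsMCS {R : Type*} [CommRing R] (S : Set R) : Prop :=
  (0 : R) ∉ S ∧ (1 : R) ∈ S ∧ ∀ s ∈ S, ∀ t ∈ S, s * t ∈ S

/-- `N` is an `S`-2-absorbing submodule of `M`. -/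
def IsS2AbsorbingSubmodule {R M : Type*} [CommRing R] [AddCommGroup M] [Module R M]
    (S : Set R) (N : Submodule R M) : Prop :=
  (∀ s ∈ S, s ∉ N.colon ⊤) ∧
  ∃ s ∈ S, ∀ a b : R, ∀ m : M, (a * b) • m ∈ N →
    s * (a * b) ∈ N.colon ⊤ ∨ (s * a) • m ∈ N ∨ (s * b) • m ∈ N

/-- `I` is an `S`-2-absorbing ideal of `R`. -/
def IsS2AbsorbingIdeal {R : Type*} [CommRing R] (S : Set R) (I : Ideal R) : Prop :=
  (∀ s ∈ S, s ∉ I) ∧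
  ∃ s ∈ S, ∀ a b c : R, a * b * c ∈ I →
    s * (a * b) ∈ I ∨ s * (a * c) ∈ I ∨ s * (b * c) ∈ I

/-- `N` is an `S`-2-absorbing second submodule of `M`. -/
def IsS2AbsorbingSecond {R M : Type*} [CommRing R] [AddCommGroup M] [Module R M]
    (S : Set R) (N : Submodule R M) : Prop :=
  (∀ s ∈ S, s ∉ N.annihilator) ∧
  ∃ s ∈ S, ∀ a b : R, ∀ K : Submodule R M, (a * b) • N ≤ K →
    (s * a) • N ≤ K ∨ (s * b) • N ≤ K ∨ (s * (a * b)) • N = ⊥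

/-- `N` is an `S`-second submodule of `M`. -/
def IsSSecond {R M : Type*} [CommRing R] [AddCommGroup M] [Module R M]
    (S : Set R) (N : Submodule R M) : Prop :=
  (∀ s ∈ S, s ∉ N.annihilator) ∧
  ∃ s ∈ S, ∀ r : R, ∀ K : Submodule R M, r • N ≤ K →
    (r * s) • N = ⊥ ∨ s • N ≤ K

/-- `N` is a strongly 2-absorbing second submodule of `M`. -/
def IsStrongly2AbsorbingSecond {R M : Type*} [CommRing R] [AddCommGroup M] [Module R M]
    (N : Submodule R M) : Prop :=
  N ≠ ⊥ ∧ ∀ a b : R, ∀ K : Submodule R M, (a * b) • N ≤ K →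
    a • N ≤ K ∨ b • N ≤ K ∨ (a * b) • N = ⊥



private lemma stmt9_smul_le {R M : Type*} [CommRing R] [AddCommGroup M] [Module R M]
    (r : R) (N K : Submodule R M) : r • N ≤ K ↔ ∀ n ∈ N, r • n ∈ K := by
  constructor
  · intro h n hn; exact h (Submodule.smul_mem_pointwise_smul n r N hn)
  · intro h m hm
    obtain ⟨n, hn, rfl⟩ := Set.mem_smul_set.mp hm
    exact h n hn

private lemma stmt9_smul_eq_bot {R M : Type*} [CommRing R] [AddCommGroup M] [Module R M]
    (r : R) (N : Submodule R M) : r • N = ⊥ ↔ ∀ n ∈ N, r • n = 0 := by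
  rw [eq_bot_iff, stmt9_smul_le]
  simp [Submodule.mem_bot]

theorem stmt9 {R M : Type*} [CommRing R] [AddCommGroup M] [Module R M]
    (S : Set R) (hS : IsMCS S) (N : Submodule R M)
    (hdisj : ∀ s ∈ S, s ∉ N.annihilator) :
    IsS2AbsorbingSecond S N ↔ ∃ s ∈ S, IsStrongly2AbsorbingSecond (s ^ 3 • N) := by
  obtain ⟨hS0, hS1, hSmul⟩ := hS
  constructor
  · rintro ⟨-, s, hsS, hmain⟩
    refine ⟨s, hsS, ?_, ?_⟩
    · intro hbot
      have hs3 : s ^ 3 ∈ S := by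
        have := hSmul _ (hSmul s hsS s hsS) s hsS
        simpa [pow_succ, pow_zero, mul_assoc] using this
      refine hdisj _ hs3 ?_
      rw [Submodule.mem_annihilator]
      intro n hn
      have := (stmt9_smul_eq_bot (s ^ 3) N).mp hbot n hn
      exact this
    · intro a b K h
      set K' : Submodule R M := K.comap (LinearMap.lsmul R M s) with hK'
      have hmemK' : ∀ m : M, m ∈ K' ↔ s • m ∈ K := fun m => Iff.rfl
      have hstep : ((s * a) * (s * b)) • N ≤ K' := by
        rw [stmt9_smul_le]
        intro n hn
        rw [hmemK', smul_smul]
        have heq : s * (s * a * (s * b)) = a * b * s ^ 3 := by ring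
        rw [heq, mul_smul]
        exact h (Submodule.smul_mem_pointwise_smul _ _ _
          (Submodule.smul_mem_pointwise_smul n _ N hn))
      rcases hmain (s * a) (s * b) K' hstep with h1 | h1 | h1
      · left
        rw [stmt9_smul_le]
        intro m hm
        obtain ⟨n, hn, rfl⟩ := Set.mem_smul_set.mp hm
        have := (stmt9_smul_le _ N K').mp h1 n hn
        rw [hmemK', smul_smul] at this
        rw [smul_smul]
        have heq : a * s ^ 3 = s * (s * (s * a)) := by ring
        rw [heq]
        exact this
      · right; left
        rw [stmt9_smul_le]
        intro m hm
        obtain ⟨n, hn, rfl⟩ := Set.mem_smul_set.mp hm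
        have := (stmt9_smul_le _ N K').mp h1 n hn
        rw [hmemK', smul_smul] at this
        rw [smul_smul]
        have heq : b * s ^ 3 = s * (s * (s * b)) := by ring
        rw [heq]
        exact this
      · right; right
        rw [stmt9_smul_eq_bot]
        intro m hm
        obtain ⟨n, hn, rfl⟩ := Set.mem_smul_set.mp hm
        have := (stmt9_smul_eq_bot _ N).mp h1 n hn
        rw [smul_smul]
        have heq : a * b * s ^ 3 = s * (s * a * (s * b)) := by ring
        rw [heq]
        exact this
  · rintro ⟨s, hsS, hne, hmain⟩
    have hs3 : s ^ 3 ∈ S := by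
      have := hSmul _ (hSmul s hsS s hsS) s hsS
      simpa [pow_succ, pow_zero, mul_assoc] using this
    refine ⟨hdisj, s ^ 3, hs3, ?_⟩
    intro a b K h
    have h' : (a * b) • (s ^ 3 • N) ≤ K := by
      rw [stmt9_smul_le]
      intro m hm
      obtain ⟨n, hn, rfl⟩ := Set.mem_smul_set.mp hm
      rw [smul_smul]
      have heq : a * b * s ^ 3 = s ^ 3 * (a * b) := by ring
      rw [heq, mul_smul]
      exact K.smul_mem _ ((stmt9_smul_le _ N K).mp h n hn)
    rcases hmain a b K h' with h1 | h1 | h1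
    · left
      rw [stmt9_smul_le]
      intro n hn
      have := (stmt9_smul_le _ _ K).mp h1 (s ^ 3 • n)
        (Submodule.smul_mem_pointwise_smul n _ N hn)
      rw [smul_smul] at this
      have heq : s ^ 3 * a = a * s ^ 3 := by ring
      rw [heq]
      exact this
    · right; left
      rw [stmt9_smul_le]
      intro n hn
      have := (stmt9_smul_le _ _ K).mp h1 (s ^ 3 • n)
        (Submodule.smul_mem_pointwise_smul n _ N hn)
      rw [smul_smul] at this
      have heq : s ^ 3 * b = b * s ^ 3 := by ring
      rw [heq]
      exact this
    · right; right
      rw [stmt9_smul_eq_bot]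
      intro n hn
      have := (stmt9_smul_eq_bot _ _).mp h1 (s ^ 3 • n)
        (Submodule.smul_mem_pointwise_smul n _ N hn)
      rw [smul_smul] at this
      have heq : s ^ 3 * (a * b) = a * b * s ^ 3 := by ring
      rw [heq]
      exact this
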